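/- Let c ≥ 1 and d ≥ 0 be integers and let w = w_1 τ_{i_1} w_2 τ_{i_2} ⋯ w_m τ_{i_m} ∈ 𝓛_std^(m) be any standard word (each w_j a standard simple word). Then the preimage under the bijection μ of the set of monomials of the OI-submodule generated by μ(w) is μ^{−1}(Mon(⟨μ(w)⟩)) = 𝓛̄_{i_1} 𝓝_{w_1} τ_{i_1} 𝓛̄_{i_2} 𝓝_{w_2} τ_{i_2} ⋯ 𝓛̄_{i_m} 𝓝_{w_m} τ_{i_m} 𝓛̄_0 ∩ 𝓛_std, where 𝓝_{w_j} is the set of simple words v such that the monomial η_1(v) is divisible by η_1(w_j). -/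

import Mathlib

noncomputable section
open scoped Computability

/-- The alphabet `Σ = {ξ_1,…,ξ_c, τ_0,…,τ_d}`. -/
inductive Letter (c d : ℕ) : Type
  | xi : Fin c → Letter c d
  | tau : Fin (d + 1) → Letter c d
deriving DecidableEq

/-- A word is *standard* if in every occurrence of two consecutive ξ-letters
`ξ_i ξ_j` one has `i ≤ j`. -/
def Standard {c d : ℕ} : List (Letter c d) → Prop :=
  List.Chain' fun a b => ∀ i j : Fin c, a = Letter.xi i → b = Letter.xi j → (i : ℕ) ≤ (j : ℕ)

/-- A *simple* word contains no τ-letters. -/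
def SimpleWord {c d : ℕ} (w : List (Letter c d)) : Prop :=
  ∀ a ∈ w, ∃ i, a = Letter.xi i

/-- Test for τ-letters. -/
def isTau {c d : ℕ} : Letter c d → Bool
  | Letter.tau _ => true
  | Letter.xi _ => false

/-- The number of τ-letters occurring in a word. -/
def tauCount {c d : ℕ} (w : List (Letter c d)) : ℕ := (w.filter isTau).length

/-- The language of one-letter words with letter drawn from `S`. -/
def letterLang {c d : ℕ} (S : Set (Letter c d)) : Language (Letter c d) :=
  {w | ∃ a ∈ S, w = [a]}

/-- The set of ξ-letters. -/
def xiSet (c d : ℕ) : Set (Letter c d) := Set.range Letter.xi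

/-- The language `𝓛_j = {ξ_1,…,ξ_c, τ_j}*`. -/
def LL (c d : ℕ) (j : Fin (d + 1)) : Language (Letter c d) :=
  (letterLang (xiSet c d ∪ {Letter.tau j}))∗

/-- The language `𝓛̄_j = ({ξ_1,…,ξ_c}* τ_j)*`. -/
def LLbar (c d : ℕ) (j : Fin (d + 1)) : Language (Letter c d) :=
  ((letterLang (xiSet c d))∗ * ({[Letter.tau j]} : Language (Letter c d)))∗

/-- The language `𝓛 = 𝓛_1 τ_1 𝓛_2 τ_2 ⋯ 𝓛_d τ_d 𝓛̄_0`. -/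
def LFull (c d : ℕ) : Language (Letter c d) :=
  (((List.finRange d).map fun j : Fin d =>
      LL c d j.succ * ({[Letter.tau j.succ]} : Language (Letter c d))).prod) * LLbar c d 0

/-- The language `𝓛_std` of standard words of `𝓛`. -/
def LStd (c d : ℕ) : Language (Letter c d) :=
  {w | w ∈ LFull c d ∧ Standard w}

/-- Monomials of `P = (X^{OI,1})^{⊗c}` (of arbitrary width), encoded by their exponent
vectors: `u (i, l)` is the exponent of the variable `x_{i,l+1}`. -/
abbrev MonP (c : ℕ) : Type := (Fin c × ℕ) →₀ ℕ

/-- Shift all variables one column to the right: `x_{k,l} ↦ x_{k,l+1}`. -/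
def shiftMon {c : ℕ} (u : MonP c) : MonP c :=
  Finsupp.mapDomain (fun v : Fin c × ℕ => (v.1, v.2 + 1)) u

/-- The shifting operator `T_i`: on the monomial it sends `x_{k,l} ↦ x_{k,l+1}`
(multiplicatively), and on a tuple `(p_1,…,p_d)` it adds `1` to `p_j` for `j ≥ i`
(1-based `j`), while `T_0` leaves the tuple unchanged. -/
def TOp {c d : ℕ} (i : Fin (d + 1)) (q : MonP c × (Fin d → ℕ)) : MonP c × (Fin d → ℕ) :=
  (shiftMon q.1,
    fun k => if 1 ≤ (i : ℕ) ∧ (i : ℕ) ≤ (k : ℕ) + 1 then q.2 k + 1 else q.2 k)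

/-- The map `η : Σ* → Mon(P) × ℕ^d`:  `η(e) = (1,(0,…,0))`, `η(ξ_i w) = x_{i,1}·η(w)`,
`η(τ_i w) = T_i(η(w))`. -/
def eta {c d : ℕ} : List (Letter c d) → MonP c × (Fin d → ℕ)
  | [] => (0, fun _ => 0)
  | Letter.xi i :: w => (Finsupp.single ((i : Fin c), (0 : ℕ)) 1 + (eta w).1, (eta w).2)
  | Letter.tau i :: w => TOp i (eta w)

/-- OI-divisibility of monomials of the free OI-module `F^{OI,d}`:
the monomial `x^b e_ρ ∈ F_n` (encoded `(b, ρ)` with 1-based tuple `ρ`) lies in the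
OI-submodule generated by `x^a e_π ∈ F_{m₀}` iff there is an order-preserving injection
`ε : [m₀] → [n]` (encoded as a strictly increasing `e : Fin m₀ → ℕ` with values in
`{1,…,n}`) such that `ρ = ε ∘ π` and the column-`i` exponents satisfy `a_i ≤ b_{ε(i)}`
componentwise. -/
def OIDiv {c d : ℕ} (m₀ n : ℕ) (a : MonP c × (Fin d → ℕ))
    (b : MonP c × (Fin d → ℕ)) : Prop :=
  ∃ e : Fin m₀ → ℕ, StrictMono e ∧ (∀ k, 1 ≤ e k ∧ e k ≤ n) ∧
    (∀ k : Fin d, ∃ k' : Fin m₀, ((k' : ℕ) + 1 = a.2 k ∧ b.2 k = e k')) ∧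
    (∀ (i : Fin c) (l : Fin m₀), a.1 (i, (l : ℕ)) ≤ b.1 (i, e l - 1))

/-- The language `𝓝_{w_j}` of simple words `v` such that the monomial `η₁(v)` is
divisible by `η₁(w_j)`. -/
def NW {c d : ℕ} (wj : List (Letter c d)) : Language (Letter c d) :=
  {v | SimpleWord v ∧ ∀ pt, (eta wj).1 pt ≤ (eta v).1 pt}

/-!
A word of `𝓛` factors uniquely into blocks `u_1 τ_{j_1} ⋯ u_n τ_{j_n}` with simple `u_t`, and its
τ-index sequence `j_1, …, j_n` has the shape `1…1 2…2 ⋯ d…d 0…0`. Under `μ` the `t`-th block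
becomes the `t`-th column of the monomial, and `π(k)` is the number of blocks with index in
`{1, …, k}`, i.e. the position of the last `τ_k`. For two index sequences of this shape these
counts determine the sequences pointwise, so a witness `ε` of `μ(w) ∣ μ(v)` amounts to: block
`ε(l)` of `v` is divisible by block `l` of `w`, the blocks of `v` in positions `ε(l-1)+1, …, ε(l)`
carry the index `i_l`, and those after `ε(m)` the index `0`. This is exactly a factorisation of
`v` along `𝓛̄_{i_1} 𝓝_{w_1} τ_{i_1} ⋯ 𝓛̄_{i_m} 𝓝_{w_m} τ_{i_m} 𝓛̄_0`.
-/

@[simp] lemma Language.mem_singleton_iff {α : Type*} {x y : List α} :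
    x ∈ ({y} : Language α) ↔ x = y := Iff.rfl

lemma List.lt_countP_iff_of_pairwise {α : Type*} {R : α → α → Prop} {p : α → Bool}
    (hp : ∀ a b, R a b → p b → p a) {x : α} (hx : p x = false) {l : List α}
    (hl : l.Pairwise R) (t : ℕ) : t < l.countP p ↔ p (l.getD t x) := by
  induction l generalizing t with
  | nil => simp [hx]
  | cons a l ih =>
    obtain ⟨haR, hl⟩ := List.pairwise_cons.1 hl
    by_cases ha : p a
    · cases t <;> simp [ha, ih hl]
    · have h0 : l.countP p = 0 := List.countP_eq_zero.2 fun b hb hpb => ha (hp a b (haR b hb) hpb)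
      rw [List.countP_cons_of_neg ha, h0]
      cases t with
      | zero => simp [ha]
      | succ t => simpa [h0] using ih hl t

lemma List.getElem_append_cons_add {α : Type*} (l₀ l₁ : List α) (a : α) (t : ℕ)
    (h : l₀.length + 1 + t < (l₀ ++ a :: l₁).length) :
    (l₀ ++ a :: l₁)[l₀.length + 1 + t] = l₁[t]'(by simp at h; omega) := by
  rw [List.getElem_append_right (by omega)]
  simp only [show l₀.length + 1 + t - l₀.length = t + 1 by omega, List.getElem_cons_succ]

lemma Nat.eq_of_forall_lt_iff_lt {a b n : ℕ} (ha : a ≤ n) (hb : b ≤ n)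
    (h : ∀ x < n, x < a ↔ x < b) : a = b :=
  le_antisymm (le_of_forall_lt fun x hx => (h x (by omega)).1 hx)
    (le_of_forall_lt fun x hx => (h x (by omega)).2 hx)

section Blocks

variable {c d : ℕ}

abbrev Block (c d : ℕ) : Type := List (Fin c) × Fin (d + 1)

def Block.word (b : Block c d) : List (Letter c d) := b.1.map Letter.xi ++ [Letter.tau b.2]

def joinBlocks (bs : List (Block c d)) : List (Letter c d) := (bs.map Block.word).flatten

@[simp] lemma joinBlocks_nil : joinBlocks ([] : List (Block c d)) = [] := rfl

@[simp] lemma joinBlocks_cons (b : Block c d) (bs : List (Block c d)) :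
    joinBlocks (b :: bs) = b.1.map Letter.xi ++ Letter.tau b.2 :: joinBlocks bs := by
  simp [joinBlocks, Block.word]

@[simp] lemma joinBlocks_append (bs bs' : List (Block c d)) :
    joinBlocks (bs ++ bs') = joinBlocks bs ++ joinBlocks bs' := by
  simp [joinBlocks]

lemma map_xi_append_tau_inj {u u' : List (Fin c)} {j j' : Fin (d + 1)}
    {r r' : List (Letter c d)}
    (h : u.map Letter.xi ++ Letter.tau j :: r = u'.map Letter.xi ++ Letter.tau j' :: r') :
    u = u' ∧ j = j' ∧ r = r' := by
  induction u generalizing u' with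
  | nil => cases u' <;> simp_all
  | cons i u ih =>
    cases u' with
    | nil => simp at h
    | cons i' u' =>
      simp only [List.map_cons, List.cons_append, List.cons.injEq, Letter.xi.injEq] at h
      obtain ⟨rfl, h⟩ := h
      obtain ⟨rfl, rfl, rfl⟩ := ih h
      exact ⟨rfl, rfl, rfl⟩

lemma joinBlocks_injective : Function.Injective (joinBlocks : List (Block c d) → _) := by
  intro bs bs' h
  induction bs generalizing bs' with
  | nil => cases bs' <;> simp_all
  | cons b bs ih =>
    cases bs' with
    | nil => simp at h
    | cons b' bs' =>
      obtain ⟨h₁, h₂, h₃⟩ := map_xi_append_tau_inj (by simpa using h)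
      rw [ih h₃, Prod.ext h₁ h₂]

lemma tauCount_joinBlocks (bs : List (Block c d)) : tauCount (joinBlocks bs) = bs.length := by
  induction bs with
  | nil => rfl
  | cons b bs ih =>
    simp_all [tauCount, List.filter_map, Function.comp_def, isTau, List.filter_cons]

lemma shiftMon_apply_succ (u : MonP c) (i : Fin c) (t : ℕ) : shiftMon u (i, t + 1) = u (i, t) :=
  Finsupp.mapDomain_apply (fun a b h => by simpa [Prod.ext_iff] using h) u (i, t)

lemma shiftMon_apply_zero (u : MonP c) (i : Fin c) : shiftMon u (i, 0) = 0 :=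
  Finsupp.mapDomain_of_notMem_range _ _ (by simp)

def blockMon (u : List (Fin c)) : MonP c := (u.map fun i => Finsupp.single (i, 0) 1).sum

lemma blockMon_apply_succ (u : List (Fin c)) (i : Fin c) (t : ℕ) : blockMon u (i, t + 1) = 0 := by
  induction u with
  | nil => rfl
  | cons i' u ih => simp_all [blockMon]

lemma blockMon_le_iff {u u' : List (Fin c)} :
    blockMon u ≤ blockMon u' ↔ ∀ i, blockMon u (i, 0) ≤ blockMon u' (i, 0) := by
  refine ⟨fun h i => h (i, 0), fun h => Finsupp.le_def.2 ?_⟩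
  rintro ⟨i, _ | t⟩
  · exact h i
  · simp [blockMon_apply_succ]

lemma eta_map_xi_append (u : List (Fin c)) (v : List (Letter c d)) :
    eta (u.map Letter.xi ++ v) = (blockMon u + (eta v).1, (eta v).2) := by
  induction u with
  | nil => simp [blockMon]
  | cons i u ih => simp [eta, ih, blockMon, add_assoc]

lemma eta_map_xi_fst (u : List (Fin c)) :
    (eta (u.map Letter.xi : List (Letter c d))).1 = blockMon u := by
  simpa [eta] using congrArg Prod.fst (eta_map_xi_append (d := d) u [])

lemma eta_joinBlocks_fst (bs : List (Block c d)) (i : Fin c) (t : ℕ) :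
    (eta (joinBlocks bs)).1 (i, t) = blockMon ((bs.map Prod.fst).getD t []) (i, 0) := by
  induction bs generalizing t with
  | nil => simp [eta, blockMon]
  | cons b bs ih =>
    rw [joinBlocks_cons, eta_map_xi_append]
    cases t with
    | zero => simp [eta, TOp, shiftMon_apply_zero]
    | succ t => simp [eta, TOp, shiftMon_apply_succ, blockMon_apply_succ, ih]

/-- The position of `τ_j` in the order `τ_1, …, τ_d, τ_0` in which the τ-letters occur in `𝓛`. -/
def tauRank (j : Fin (d + 1)) : ℕ := if (j : ℕ) = 0 then d + 1 else j

lemma tauRank_le_iff {K : ℕ} (hK : K ≤ d) (j : Fin (d + 1)) :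
    tauRank j ≤ K ↔ 1 ≤ (j : ℕ) ∧ (j : ℕ) ≤ K := by
  unfold tauRank
  split_ifs <;> omega

lemma tauRank_injective : Function.Injective (tauRank : Fin (d + 1) → ℕ) := by
  intro a b h
  unfold tauRank at h
  apply Fin.ext
  split_ifs at h <;> omega

lemma one_le_tauRank (j : Fin (d + 1)) : 1 ≤ tauRank j := by
  unfold tauRank
  split_ifs <;> omega

lemma tauRank_le (j : Fin (d + 1)) : tauRank j ≤ d + 1 := by
  unfold tauRank
  split_ifs <;> omega

def countRankLE (K : ℕ) (J : List (Fin (d + 1))) : ℕ := J.countP fun j => tauRank j ≤ K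

lemma countRankLE_le_length (K : ℕ) (J : List (Fin (d + 1))) : countRankLE K J ≤ J.length :=
  List.countP_le_length

lemma eta_joinBlocks_snd (bs : List (Block c d)) (k : Fin d) :
    (eta (joinBlocks bs)).2 k = countRankLE (k + 1) (bs.map Prod.snd) := by
  induction bs with
  | nil => simp [eta, countRankLE]
  | cons b bs ih =>
    rw [joinBlocks_cons, eta_map_xi_append]
    simp only [eta, TOp, ih, countRankLE, List.map_cons, List.countP_cons,
      tauRank_le_iff (Nat.succ_le_of_lt k.isLt), decide_eq_true_eq]
    split_ifs <;> rfl

lemma eq_of_forall_tauRank_le_iff {a b : Fin (d + 1)}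
    (h : ∀ k : Fin d, tauRank a ≤ k + 1 ↔ tauRank b ≤ k + 1) : a = b := by
  apply tauRank_injective
  have ha := one_le_tauRank a
  have hb := one_le_tauRank b
  have ha' := tauRank_le a
  have hb' := tauRank_le b
  by_contra hne
  rcases Nat.lt_or_gt_of_ne hne with hlt | hlt
  · have := h ⟨tauRank a - 1, by omega⟩
    simp only at this
    omega
  · have := h ⟨tauRank b - 1, by omega⟩
    simp only at this
    omega

lemma lt_countRankLE_iff {J : List (Fin (d + 1))} (hJ : J.Pairwise (tauRank · ≤ tauRank ·))
    {K : ℕ} (hK : K ≤ d) (t : ℕ) : t < countRankLE K J ↔ tauRank (J.getD t 0) ≤ K := by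
  simpa [countRankLE] using List.lt_countP_iff_of_pairwise (p := fun j => tauRank j ≤ K)
    (fun a b hab hb => by simp only [decide_eq_true_eq] at hb ⊢; omega)
    (by simp [tauRank]; omega) hJ t

def countBelow {m : ℕ} (e : Fin m → ℕ) (t : ℕ) : ℕ := (Finset.univ.filter fun l => e l < t).card

lemma countBelow_le_iff {m : ℕ} {e : Fin m → ℕ} (he : StrictMono e) (l : Fin m) (t : ℕ) :
    countBelow e t ≤ l ↔ t ≤ e l := by
  unfold countBelow
  constructor
  · intro h
    by_contra! hlt
    have : Finset.Iic l ⊆ Finset.univ.filter fun l' => e l' < t := fun l' hl' => by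
      simp only [Finset.mem_Iic] at hl'
      simpa using lt_of_le_of_lt (he.monotone hl') hlt
    have := Finset.card_le_card this
    simp only [Fin.card_Iic] at this
    omega
  · intro h
    have : (Finset.univ.filter fun l' => e l' < t) ⊆ Finset.Iio l := fun l' hl' => by
      simp only [Finset.mem_filter, Finset.mem_univ, true_and] at hl'
      simpa using he.lt_iff_lt.1 (by omega : e l' < e l)
    simpa [Fin.card_Iio] using Finset.card_le_card this

lemma countBelow_cons_of_le {m x t : ℕ} (f : Fin m → ℕ) (ht : t ≤ x) :
    countBelow (Fin.cons x fun l => x + 1 + f l : Fin (m + 1) → ℕ) t = 0 := by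
  simp only [countBelow, Finset.card_eq_zero, Finset.filter_eq_empty_iff]
  intro l _
  cases l using Fin.cases <;> simp <;> omega

lemma countBelow_cons_add {m x : ℕ} (f : Fin m → ℕ) (t : ℕ) :
    countBelow (Fin.cons x fun l => x + 1 + f l : Fin (m + 1) → ℕ) (x + 1 + t) =
      countBelow f t + 1 := by
  simp [countBelow, Fin.card_filter_univ_succ]
  omega

/-- `e` places the `l`-th block of the pattern `L` at position `e l` of `bs`; every position `t`
of `bs` carries the τ-index of the first pattern block placed at or after `t`, or `0` if there is
none. -/
structure IsPlacement (L bs : List (Block c d)) (e : Fin L.length → ℕ) : Prop where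
  strictMono : StrictMono e
  lt_length : ∀ l, e l < bs.length
  blockMon_le : ∀ l, blockMon L[l].1 ≤ blockMon (bs[e l]'(lt_length l)).1
  index_eq : ∀ t (ht : t < bs.length), bs[t].2 = (L.map Prod.snd).getD (countBelow e t) 0

lemma isPlacement_nil_iff {bs : List (Block c d)} {e : Fin 0 → ℕ} :
    IsPlacement [] bs e ↔ ∀ b ∈ bs, b.2 = 0 := by
  refine ⟨fun h b hb => ?_, fun h => ⟨fun a => a.elim0, fun a => a.elim0, fun a => a.elim0, ?_⟩⟩
  · obtain ⟨t, ht, rfl⟩ := List.getElem_of_mem hb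
    simpa using h.index_eq t ht
  · intro t ht
    simpa using h _ (List.getElem_mem ht)

lemma isPlacement_cons_shift_iff {p : Block c d} {L bs₀ bs₁ : List (Block c d)}
    {s : List (Fin c)} {j : Fin (d + 1)} {e : Fin L.length → ℕ} :
    IsPlacement (p :: L) (bs₀ ++ (s, j) :: bs₁)
        (Fin.cons bs₀.length fun l => bs₀.length + 1 + e l) ↔
      (∀ b ∈ bs₀, b.2 = p.2) ∧ j = p.2 ∧ blockMon p.1 ≤ blockMon s ∧ IsPlacement L bs₁ e := by
  constructor
  · intro h
    refine ⟨fun b hb => ?_, ?_, by simpa using h.blockMon_le 0,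
      ⟨fun a b hab => by simpa using (Fin.strictMono_cons.1 h.strictMono).2 hab,
        fun l => by have := h.lt_length l.succ; simp at this; omega, fun l => ?_, fun t ht => ?_⟩⟩
    · obtain ⟨t, ht, rfl⟩ := List.getElem_of_mem hb
      have := h.index_eq t (by simp; omega)
      rwa [List.getElem_append_left ht, countBelow_cons_of_le e ht.le] at this
    · simpa [countBelow_cons_of_le e le_rfl] using h.index_eq bs₀.length (by simp)
    · have := h.blockMon_le l.succ
      simp only [Fin.cons_succ] at this
      rwa [List.getElem_append_cons_add] at this
    · have := h.index_eq (bs₀.length + 1 + t) (by simp; omega)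
      rwa [List.getElem_append_cons_add, countBelow_cons_add] at this
  · rintro ⟨h₀, rfl, hs, h⟩
    refine ⟨Fin.strictMono_cons.2
        ⟨fun l => by omega, fun a b hab => by simpa using h.strictMono hab⟩,
      Fin.cases (by simp) fun l => by simp; have := h.lt_length l; omega,
      Fin.cases (by simpa using hs) fun l => by
        simpa [List.getElem_append_cons_add] using h.blockMon_le l,
      fun t ht => ?_⟩
    rcases lt_trichotomy t bs₀.length with hlt | rfl | hgt
    · rw [List.getElem_append_left hlt, countBelow_cons_of_le e hlt.le]
      exact h₀ _ (List.getElem_mem hlt)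
    · simp [countBelow_cons_of_le e le_rfl]
    · obtain ⟨t, rfl⟩ : ∃ t', t = bs₀.length + 1 + t' := ⟨t - (bs₀.length + 1), by omega⟩
      rw [List.getElem_append_cons_add, countBelow_cons_add]
      exact h.index_eq t (by simp at ht; omega)

lemma exists_isPlacement_cons_iff {p : Block c d} {L bs : List (Block c d)} :
    (∃ e, IsPlacement (p :: L) bs e) ↔
      ∃ bs₀ s bs₁, bs = bs₀ ++ (s, p.2) :: bs₁ ∧ (∀ b ∈ bs₀, b.2 = p.2) ∧
        blockMon p.1 ≤ blockMon s ∧ ∃ e, IsPlacement L bs₁ e := by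
  constructor
  · rintro ⟨e, he⟩
    have h0 := he.lt_length 0
    obtain ⟨bs₀, ⟨s, j⟩, bs₁, rfl, hlen⟩ : ∃ bs₀ b bs₁, bs = bs₀ ++ b :: bs₁ ∧ bs₀.length = e 0 :=
      ⟨bs.take (e 0), bs[e 0], bs.drop (e 0 + 1), by simp [List.getElem_cons_drop],
        by simp; omega⟩
    have he' : e = Fin.cons bs₀.length fun l => bs₀.length + 1 + (e l.succ - (e 0 + 1)) := by
      funext l
      cases l using Fin.cases with
      | zero => simp [hlen]
      | succ l => have := he.strictMono (Fin.succ_pos l); simp; omega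
    rw [he'] at he
    obtain ⟨h₀, rfl, hs, h⟩ := isPlacement_cons_shift_iff.1 he
    exact ⟨bs₀, s, bs₁, rfl, h₀, hs, _, h⟩
  · rintro ⟨bs₀, s, bs₁, rfl, h₀, hs, e, h⟩
    exact ⟨_, isPlacement_cons_shift_iff.2 ⟨h₀, rfl, hs, h⟩⟩

lemma mem_kstar_letterLang {S : Set (Letter c d)} {v : List (Letter c d)} :
    v ∈ (letterLang S)∗ ↔ ∀ a ∈ v, a ∈ S := by
  rw [Language.mem_kstar]
  constructor
  · rintro ⟨L, rfl, hL⟩ a ha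
    obtain ⟨y, hy, hay⟩ := List.mem_flatten.1 ha
    obtain ⟨b, hb, rfl⟩ := hL y hy
    rwa [List.mem_singleton.1 hay]
  · intro hv
    refine ⟨v.map fun a => [a], (List.flatMap_singleton' v).symm, fun y hy => ?_⟩
    obtain ⟨a, ha, rfl⟩ := List.mem_map.1 hy
    exact ⟨a, hv a ha, rfl⟩

lemma simpleWord_iff {v : List (Letter c d)} :
    SimpleWord v ↔ ∃ u : List (Fin c), v = u.map Letter.xi := by
  constructor
  · intro h
    obtain ⟨u, hu⟩ : v ∈ Set.range (List.map Letter.xi) := by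
      rw [Set.range_list_map]
      exact fun a ha => (h a ha).imp fun _ => Eq.symm
    exact ⟨u, hu.symm⟩
  · rintro ⟨u, rfl⟩ a ha
    obtain ⟨i, -, rfl⟩ := List.mem_map.1 ha
    exact ⟨i, rfl⟩

lemma mem_xiStar_iff {v : List (Letter c d)} :
    v ∈ (letterLang (xiSet c d))∗ ↔ ∃ u : List (Fin c), v = u.map Letter.xi := by
  rw [mem_kstar_letterLang, ← simpleWord_iff]
  simp [SimpleWord, xiSet, eq_comm]

lemma mem_NW_map_xi_iff {u : List (Fin c)} {v : List (Letter c d)} :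
    v ∈ NW (u.map Letter.xi) ↔ ∃ s, v = s.map Letter.xi ∧ blockMon u ≤ blockMon s := by
  simp only [NW, simpleWord_iff, eta_map_xi_fst]
  constructor
  · rintro ⟨⟨s, rfl⟩, h⟩
    exact ⟨s, rfl, Finsupp.le_def.2 (by simpa [eta_map_xi_fst] using h)⟩
  · rintro ⟨s, rfl, h⟩
    exact ⟨⟨s, rfl⟩, by simpa [eta_map_xi_fst] using Finsupp.le_def.1 h⟩

lemma mem_LLbar_iff {j : Fin (d + 1)} {v : List (Letter c d)} :
    v ∈ LLbar c d j ↔ ∃ bs : List (Block c d), v = joinBlocks bs ∧ ∀ b ∈ bs, b.2 = j := by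
  have hblock (y : List (Letter c d)) :
      y ∈ (letterLang (xiSet c d))∗ * {[Letter.tau j]} ↔ ∃ u, Block.word (u, j) = y := by
    simp [Language.mem_mul, mem_xiStar_iff, Block.word]
  rw [LLbar, Language.mem_kstar]
  constructor
  · rintro ⟨S, rfl, hS⟩
    obtain ⟨us, rfl⟩ : S ∈ Set.range (List.map fun u => Block.word (u, j)) := by
      rw [Set.range_list_map]
      exact fun y hy => (hblock y).1 (hS y hy)
    exact ⟨us.map fun u => (u, j), by simp [joinBlocks, Function.comp_def], by simp⟩
  · rintro ⟨bs, rfl, hbs⟩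
    refine ⟨bs.map Block.word, rfl, fun y hy => ?_⟩
    obtain ⟨b, hb, rfl⟩ := List.mem_map.1 hy
    exact (hblock _).2 ⟨b.1, by rw [← hbs b hb]⟩

def patternLang (L : List (Block c d)) : Language (Letter c d) :=
  (L.map fun p => LLbar c d p.2 * NW (p.1.map Letter.xi) * {[Letter.tau p.2]}).prod * LLbar c d 0

lemma mem_patternLang_iff {L : List (Block c d)} {v : List (Letter c d)} :
    v ∈ patternLang L ↔ ∃ bs, v = joinBlocks bs ∧ ∃ e, IsPlacement L bs e := by
  induction L generalizing v with
  | nil => simp [patternLang, mem_LLbar_iff, isPlacement_nil_iff]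
  | cons p L ih =>
    have hL : patternLang (p :: L) =
        LLbar c d p.2 * NW (p.1.map Letter.xi) * {[Letter.tau p.2]} * patternLang L := by
      rw [patternLang, List.map_cons, List.prod_cons, mul_assoc, patternLang]
    simp only [hL, Language.mem_mul, mem_LLbar_iff, mem_NW_map_xi_iff, Language.mem_singleton_iff,
      ih, exists_isPlacement_cons_iff]
    constructor
    · rintro ⟨_, ⟨_, ⟨_, ⟨bs₀, rfl, h₀⟩, _, ⟨s, rfl, hs⟩, rfl⟩, _, rfl, rfl⟩, _, ⟨bs₁, rfl, he⟩,
        rfl⟩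
      exact ⟨bs₀ ++ (s, p.2) :: bs₁, by simp, bs₀, s, bs₁, rfl, h₀, hs, he⟩
    · rintro ⟨_, rfl, bs₀, s, bs₁, rfl, h₀, hs, he⟩
      exact ⟨_, ⟨_, ⟨_, ⟨bs₀, rfl, h₀⟩, _, ⟨s, rfl, hs⟩, rfl⟩, _, rfl, rfl⟩, _, ⟨bs₁, rfl, he⟩,
        by simp⟩

lemma exists_joinBlocks_of_mem_LL {j : Fin (d + 1)} {u : List (Letter c d)} (hu : u ∈ LL c d j) :
    ∃ bs : List (Block c d),
      u ++ [Letter.tau j] = joinBlocks bs ∧ (∀ b ∈ bs, b.2 = j) ∧ bs ≠ [] := by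
  rw [LL, mem_kstar_letterLang] at hu
  induction u with
  | nil => exact ⟨[([], j)], by simp, by simp, by simp⟩
  | cons a u ih =>
    obtain ⟨bs, hbs, hj, hne⟩ := ih fun x hx => hu x (List.mem_cons_of_mem _ hx)
    rcases hu a List.mem_cons_self with ⟨i, rfl⟩ | ha
    · obtain ⟨⟨s, j'⟩, bs, rfl⟩ := List.exists_cons_of_ne_nil hne
      exact ⟨(i :: s, j') :: bs, by simpa using hbs, by simpa using hj, by simp⟩
    · rw [Set.mem_singleton_iff.1 ha]
      exact ⟨([], j) :: bs, by simp [hbs], by simpa using hj, by simp⟩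

lemma exists_joinBlocks_of_mem_prod {ks : List (Fin (d + 1))}
    (hks : ks.Pairwise (tauRank · ≤ tauRank ·)) {v : List (Letter c d)}
    (hv : v ∈ (ks.map fun k => LL c d k * {[Letter.tau k]}).prod * LLbar c d 0) :
    ∃ bs : List (Block c d), v = joinBlocks bs ∧
      (bs.map Prod.snd).Pairwise (tauRank · ≤ tauRank ·) ∧ (∀ k ∈ ks, k ∈ bs.map Prod.snd) ∧
      ∀ j ∈ bs.map Prod.snd, j ∈ ks ∨ j = 0 := by
  induction ks generalizing v with
  | nil =>
    obtain ⟨bs, rfl, h₀⟩ := mem_LLbar_iff.1 (by simpa using hv)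
    have h₀' : ∀ j ∈ bs.map Prod.snd, j = 0 := by
      simpa using fun j u hb => h₀ (u, j) hb
    exact ⟨bs, rfl, List.pairwise_of_forall_mem_list fun a ha b hb => by rw [h₀' a ha, h₀' b hb],
      by simp, fun j hj => .inr (h₀' j hj)⟩
  | cons k ks ih =>
    obtain ⟨hk, hks⟩ := List.pairwise_cons.1 hks
    rw [List.map_cons, List.prod_cons, mul_assoc] at hv
    obtain ⟨_, hy, r, hr, rfl⟩ := Language.mem_mul.1 hv
    obtain ⟨u, hu, _, rfl, rfl⟩ := Language.mem_mul.1 hy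
    obtain ⟨bs₀, hbs₀, h₀, hne⟩ := exists_joinBlocks_of_mem_LL hu
    obtain ⟨bs₁, rfl, hs₁, hocc, hmem⟩ := ih hks hr
    have h₀' : ∀ j ∈ bs₀.map Prod.snd, j = k := by
      simpa using fun j u hb => h₀ (u, j) hb
    refine ⟨bs₀ ++ bs₁, by simp [hbs₀], ?_, ?_, ?_⟩
    · rw [List.map_append, List.pairwise_append]
      refine ⟨List.pairwise_of_forall_mem_list fun a ha b hb => by rw [h₀' a ha, h₀' b hb], hs₁,
        fun a ha b hb => ?_⟩
      rw [h₀' a ha]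
      rcases hmem b hb with hb | rfl
      · exact hk b hb
      · simpa [tauRank] using tauRank_le k
    · obtain ⟨b, bs₀, rfl⟩ := List.exists_cons_of_ne_nil hne
      simp only [List.forall_mem_cons] at hocc h₀ ⊢
      exact ⟨by simp [h₀.1], fun k' hk' => by simp [hocc k' hk']⟩
    · intro j hj
      rw [List.map_append, List.mem_append] at hj
      rcases hj with hj | hj
      · exact .inl (h₀' j hj ▸ List.mem_cons_self)
      · exact (hmem j hj).imp_left (List.mem_cons_of_mem k)

lemma exists_joinBlocks_of_mem_LFull {v : List (Letter c d)} (hv : v ∈ LFull c d) :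
    ∃ bs : List (Block c d), v = joinBlocks bs ∧
      (bs.map Prod.snd).Pairwise (tauRank · ≤ tauRank ·) ∧ ∀ j, j ≠ 0 → j ∈ bs.map Prod.snd := by
  have hks : ((List.finRange d).map Fin.succ).Pairwise (tauRank · ≤ tauRank ·) :=
    List.pairwise_map.2 ((List.pairwise_lt_finRange d).imp fun h => by simp [tauRank]; omega)
  have hL : LFull c d = (((List.finRange d).map Fin.succ).map
      fun k => LL c d k * {[Letter.tau k]}).prod * LLbar c d 0 := by
    rw [LFull, List.map_map]
    rfl
  rw [hL] at hv
  obtain ⟨bs, rfl, hs, hocc, -⟩ := exists_joinBlocks_of_mem_prod hks hv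
  refine ⟨bs, rfl, hs, fun j hj => hocc j ?_⟩
  exact List.mem_map.2 ⟨j.pred hj, List.mem_finRange _, Fin.succ_pred j hj⟩

lemma index_eq_iff_countRankLE {L bs : List (Block c d)} {e : Fin L.length → ℕ}
    (hI : (L.map Prod.snd).Pairwise (tauRank · ≤ tauRank ·))
    (hIfull : ∀ j, j ≠ 0 → j ∈ L.map Prod.snd)
    (hJ : (bs.map Prod.snd).Pairwise (tauRank · ≤ tauRank ·))
    (he : StrictMono e) (hlt : ∀ l, e l < bs.length) :
    (∀ t (ht : t < bs.length), bs[t].2 = (L.map Prod.snd).getD (countBelow e t) 0) ↔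
      ∀ k : Fin d, ∃ l : Fin L.length, (l : ℕ) + 1 = countRankLE (k + 1) (L.map Prod.snd) ∧
        countRankLE (k + 1) (bs.map Prod.snd) = e l + 1 := by
  have hkd (k : Fin d) : (k : ℕ) + 1 ≤ d := k.isLt
  have hrank_bs (k : Fin d) (t : ℕ) (ht : t < bs.length) :
      tauRank bs[t].2 ≤ k + 1 ↔ t < countRankLE (k + 1) (bs.map Prod.snd) := by
    rw [lt_countRankLE_iff hJ (hkd k)]
    simp [ht]
  have hrank_L (k : Fin d) (l : Fin L.length)
      (hl : (l : ℕ) + 1 = countRankLE (k + 1) (L.map Prod.snd)) (t : ℕ) : tauRank ((L.map Prod.snd).getD (countBelow e t) 0) ≤ k + 1 ↔ t ≤ e l := by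
    rw [← lt_countRankLE_iff hI (hkd k), ← hl, Nat.lt_succ_iff, countBelow_le_iff he]
  have hpos (k : Fin d) :
      ∃ l : Fin L.length, (l : ℕ) + 1 = countRankLE (k + 1) (L.map Prod.snd) := by
    have h1 : 0 < countRankLE (k + 1) (L.map Prod.snd) :=
      List.countP_pos_iff.2 ⟨k.succ, hIfull _ (Fin.succ_ne_zero k), by simp [tauRank]⟩
    have h2 : countRankLE (k + 1) (L.map Prod.snd) ≤ L.length := by
      simpa using countRankLE_le_length (k + 1) (L.map Prod.snd)
    exact ⟨⟨countRankLE (k + 1) (L.map Prod.snd) - 1, by omega⟩, by simp; omega⟩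
  constructor
  · intro h k
    obtain ⟨l, hl⟩ := hpos k
    refine ⟨l, hl, Nat.eq_of_forall_lt_iff_lt (n := bs.length) ?_ (hlt l) fun t ht => ?_⟩
    · simpa using countRankLE_le_length (k + 1) (bs.map Prod.snd)
    · rw [← hrank_bs k t ht, h t ht, hrank_L k l hl, Nat.lt_succ_iff]
  · intro h t ht
    refine eq_of_forall_tauRank_le_iff fun k => ?_
    obtain ⟨l, hl, hcount⟩ := h k
    rw [hrank_bs k t ht, hcount, hrank_L k l hl, Nat.lt_succ_iff]

lemma oiDiv_joinBlocks_iff {m : ℕ} {L bs : List (Block c d)} (hm : L.length = m)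
    (hI : (L.map Prod.snd).Pairwise (tauRank · ≤ tauRank ·))
    (hIfull : ∀ j, j ≠ 0 → j ∈ L.map Prod.snd)
    (hJ : (bs.map Prod.snd).Pairwise (tauRank · ≤ tauRank ·)) :
    OIDiv m bs.length (eta (joinBlocks L)) (eta (joinBlocks bs)) ↔ ∃ e, IsPlacement L bs e := by
  subst hm
  simp only [OIDiv, eta_joinBlocks_fst, eta_joinBlocks_snd]
  constructor
  · rintro ⟨e, he, hbd, hcount, hdiv⟩
    have he' : StrictMono fun l => e l - 1 := fun a b hab => by
      have := he hab; have := hbd a; dsimp only; omega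
    have hlt (l : Fin L.length) : e l - 1 < bs.length := by have := hbd l; omega
    refine ⟨fun l => e l - 1, ⟨he', hlt, fun l => blockMon_le_iff.2 fun i => ?_, ?_⟩⟩
    · simpa [hlt l] using hdiv i l
    · refine (index_eq_iff_countRankLE hI hIfull hJ he' hlt).2 fun k => ?_
      obtain ⟨l, h1, h2⟩ := hcount k
      exact ⟨l, h1, by have := hbd l; omega⟩
  · rintro ⟨e, he⟩
    refine ⟨fun l => e l + 1, fun a b hab => by simpa using he.strictMono hab,
      fun l => ⟨Nat.le_add_left 1 _, he.lt_length l⟩, fun k => ?_, fun i l => ?_⟩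
    · exact (index_eq_iff_countRankLE hI hIfull hJ he.strictMono he.lt_length).1 he.index_eq k
    · simpa [he.lt_length l] using blockMon_le_iff.1 (he.blockMon_le l) i

end Blocks

theorem preimage_of_monomials_of_principal_submodule_general
    (c d : ℕ) (m : ℕ)
    (ws : Fin m → List (Letter c d)) (idx : Fin m → Fin (d + 1))
    (hsimple : ∀ j, SimpleWord (ws j))
    (w : List (Letter c d))
    (hw : w = (List.ofFn fun j : Fin m => ws j ++ [Letter.tau (idx j)]).flatten)
    (hwL : w ∈ LStd c d) :
    {v : List (Letter c d) | v ∈ LStd c d ∧ OIDiv m (tauCount v) (eta w) (eta v)}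
      = {v | v ∈
          (((List.finRange m).map fun j : Fin m =>
              LLbar c d (idx j) * NW (ws j) *
                ({[Letter.tau (idx j)]} : Language (Letter c d))).prod
            * LLbar c d 0)
          ∧ v ∈ LStd c d} := by
  choose us hus using fun j => simpleWord_iff.1 (hsimple j)
  set L : List (Block c d) := List.ofFn fun j => (us j, idx j) with hL
  have hwJ : w = joinBlocks L := by
    simp [hw, hL, joinBlocks, Block.word, hus, List.map_ofFn, Function.comp_def]
  have hpat : ((List.finRange m).map fun j => LLbar c d (idx j) * NW (ws j) *
      ({[Letter.tau (idx j)]} : Language (Letter c d))).prod * LLbar c d 0 = patternLang L := by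
    simp [patternLang, hL, List.ofFn_eq_map, hus, Function.comp_def]
  obtain ⟨bw, hbw, hI, hIfull⟩ := exists_joinBlocks_of_mem_LFull hwL.1
  obtain rfl : bw = L := joinBlocks_injective (hbw.symm.trans hwJ)
  ext v
  rw [hpat, Set.mem_ofPred_eq, Set.mem_ofPred_eq, and_comm (a := v ∈ patternLang L)]
  refine and_congr_right fun hv => ?_
  obtain ⟨bs, rfl, hJ, -⟩ := exists_joinBlocks_of_mem_LFull hv.1
  rw [tauCount_joinBlocks, hwJ, oiDiv_joinBlocks_iff (by simp [hL]) hI hIfull hJ,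
    mem_patternLang_iff]
  exact ⟨fun h => ⟨bs, rfl, h⟩, fun ⟨bs', h, he⟩ => joinBlocks_injective h ▸ he⟩

/-- **Preimage of the monomials of a principal monomial OI-submodule**
(Proposition 3.4).  For a standard word
`w = w_1 τ_{i_1} w_2 τ_{i_2} ⋯ w_m τ_{i_m} ∈ 𝓛_std^(m)`, the preimage under `μ` of the
set of monomials of the OI-submodule `⟨μ(w)⟩` is
`𝓛̄_{i_1} 𝓝_{w_1} τ_{i_1} 𝓛̄_{i_2} 𝓝_{w_2} τ_{i_2} ⋯ 𝓛̄_{i_m} 𝓝_{w_m} τ_{i_m} 𝓛̄_0 ∩ 𝓛_std`. -/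
theorem preimage_of_monomials_of_principal_submodule
    (c d : ℕ) (hc : 1 ≤ c) (m : ℕ)
    (ws : Fin m → List (Letter c d)) (idx : Fin m → Fin (d + 1))
    (hsimple : ∀ j, SimpleWord (ws j)) (hstd : ∀ j, Standard (ws j))
    (w : List (Letter c d))
    (hw : w = (List.ofFn fun j : Fin m => ws j ++ [Letter.tau (idx j)]).flatten)
    (hwL : w ∈ LStd c d) (hwm : tauCount w = m) :
    {v : List (Letter c d) | v ∈ LStd c d ∧ OIDiv m (tauCount v) (eta w) (eta v)}
      = {v | v ∈
          (((List.finRange m).map fun j : Fin m =>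
              LLbar c d (idx j) * NW (ws j) *
                ({[Letter.tau (idx j)]} : Language (Letter c d))).prod
            * LLbar c d 0)
          ∧ v ∈ LStd c d} :=
  preimage_of_monomials_of_principal_submodule_general c d m ws idx hsimple w hw hwL

end
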